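/- arXiv:2201.09285 — 3 statements merged into one kernel-verified Lean document; each statement's English description precedes it below -/
import Mathlib

section
/- Let n ≥ 1 and let e : Fin n → ℝ with e s ≠ 0 for every s. Define the chain observability matrix O : Matrix (Fin n) (Fin n) ℝ by: O 0 0 = e 0; for k ≥ 1, O k (k-1) = e k and O k k = -(e k); and all other entries zero (this encodes a chain relative position measurement graph in which vehicle 1 measures a landmark with measurement derivative e 0 and vehicle k+1 is measured relative to vehicle k with measurement derivative e k). Then O is invertible and for all indices i, j, the (i,j) entry of (Oᵀ * O)⁻¹ equals ∑_{s ≤ min(i,j)} 1/(e s)². In particular the covariance of vehicle i, the (i,i) entry, equals the sum of 1/(e s)² over the edges s on the path from vehicle i back to the landmark. -/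
/-!
Row `k` of the chain observability matrix is `±e k` times a backward difference, so
`O = diag(±e) · Δ`, and `Δ` is inverted by the lower-triangular matrix of ones `L`.
Hence `O⁻¹ = L · diag(±e)⁻¹` and `(OᵀO)⁻¹ = O⁻¹ O⁻ᵀ = L · diag(1/e²) · Lᵀ`, whose `(i, j)`
entry sums `1/(e s)²` over the `s` lying below both `i` and `j`, i.e. over the common part of the
paths from vehicles `i` and `j` back to the landmark.
-/

open Matrix Finset

namespace ChainCovariance

variable {R : Type*}

def lowerOnes [Zero R] [One R] (n : ℕ) : Matrix (Fin n) (Fin n) R :=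
  of fun i s => if s ≤ i then 1 else 0

def backwardDiff [Zero R] [One R] [Neg R] (n : ℕ) : Matrix (Fin n) (Fin n) R :=
  of fun k l => if l = k then 1 else if (l : ℕ) + 1 = k then -1 else 0

@[simp]
theorem lowerOnes_apply [Zero R] [One R] {n : ℕ} (i s : Fin n) :
    (lowerOnes n : Matrix (Fin n) (Fin n) R) i s = if s ≤ i then 1 else 0 := rfl

@[simp]
theorem backwardDiff_apply [Zero R] [One R] [Neg R] {n : ℕ} (k l : Fin n) :
    (backwardDiff n : Matrix (Fin n) (Fin n) R) k l =
      if l = k then 1 else if (l : ℕ) + 1 = k then -1 else 0 := rfl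

theorem backwardDiff_mul_lowerOnes [Ring R] (n : ℕ) :
    backwardDiff n * lowerOnes n = (1 : Matrix (Fin n) (Fin n) R) := by
  ext k l
  rw [mul_apply]
  by_cases hk : (k : ℕ) = 0
  · rw [Finset.sum_eq_single k]
    · simp [one_apply, Fin.le_def, Fin.ext_iff, hk, eq_comm]
    · intro s _ hs
      simp [hs, hk]
    · simp
  · rw [Finset.sum_eq_add ⟨k - 1, by omega⟩ k (by simp [Fin.ext_iff]; omega)]
    · simp only [backwardDiff_apply, lowerOnes_apply, one_apply, Fin.ext_iff, Fin.le_def]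
      split_ifs <;> first | omega | simp
    · intro s _ hs
      have hs' : (s : ℕ) + 1 ≠ k := fun h => hs.1 (Fin.ext (by simp only; omega))
      rw [backwardDiff_apply, if_neg hs.2, if_neg hs', zero_mul]
    · simp
    · simp

theorem inv_transpose_mul_self_of_mul_eq_one {ι : Type*} [Fintype ι] [DecidableEq ι]
    [CommRing R] {A B : Matrix ι ι R} (h : A * B = 1) : (Aᵀ * A)⁻¹ = B * Bᵀ := by
  apply inv_eq_right_inv
  calc Aᵀ * A * (B * Bᵀ) = Aᵀ * (A * B) * Bᵀ := by simp only [Matrix.mul_assoc]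
    _ = (B * A)ᵀ := by rw [h, Matrix.mul_one, transpose_mul]
    _ = 1 := by rw [mul_eq_one_comm.mp h, transpose_one]

theorem mul_diagonal_mul_transpose_apply {ι : Type*} [Fintype ι] [DecidableEq ι]
    [CommRing R] (A : Matrix ι ι R) (w : ι → R) (i j : ι) :
    (A * diagonal w * (A * diagonal w)ᵀ) i j = ∑ s, A i s * A j s * w s ^ 2 := by
  rw [mul_apply]
  simp only [mul_diagonal, transpose_apply]
  exact Finset.sum_congr rfl fun s _ => by ring

theorem eq_diagonal_mul_backwardDiff [Ring R] {n : ℕ} (e : Fin n → R)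
    (O : Matrix (Fin n) (Fin n) R)
    (hO : ∀ k l : Fin n,
      O k l = if (k : ℕ) = 0 then (if l = k then e k else 0)
        else if (l : ℕ) = (k : ℕ) - 1 then e k
        else if l = k then -(e k) else 0) :
    O = diagonal (fun k : Fin n => if (k : ℕ) = 0 then e k else -e k) * backwardDiff n := by
  ext k l
  rw [hO, diagonal_mul, backwardDiff_apply]
  by_cases hk : (k : ℕ) = 0
  · simp [hk]
  · by_cases hl : l = k
    · subst hl
      have : (l : ℕ) ≠ l - 1 := by omega
      simp [hk, this]
    · have hlk : (l : ℕ) = k - 1 ↔ (l : ℕ) + 1 = k := by omega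
      simp [hk, hl, hlk]

end ChainCovariance

open ChainCovariance in
theorem chain_covariance_landmark_first_general
    (n : ℕ) (e : Fin n → ℝ) (he : ∀ s, e s ≠ 0)
    (O : Matrix (Fin n) (Fin n) ℝ)
    (hO : ∀ k l : Fin n,
      O k l = if (k : ℕ) = 0 then (if l = k then e k else 0)
        else if (l : ℕ) = (k : ℕ) - 1 then e k
        else if l = k then -(e k) else 0) :
    IsUnit O ∧
    ∀ i j : Fin n,
      (Oᵀ * O)⁻¹ i j
        = ∑ s ∈ Finset.univ.filter (fun s : Fin n => (s : ℕ) ≤ min (i : ℕ) (j : ℕ)),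
            1 / (e s) ^ 2 := by
  set d : Fin n → ℝ := fun k => if (k : ℕ) = 0 then e k else -e k
  have hd : ∀ k, d k ≠ 0 := fun k => by
    by_cases hk : (k : ℕ) = 0 <;> simp [d, hk, he k]
  have hOB : O * (lowerOnes n * diagonal d⁻¹) = 1 := by
    rw [eq_diagonal_mul_backwardDiff e O hO, Matrix.mul_assoc,
      ← Matrix.mul_assoc (backwardDiff n), backwardDiff_mul_lowerOnes,
      Matrix.one_mul, diagonal_mul_diagonal, ← diagonal_one]
    exact congrArg diagonal (funext fun k => mul_inv_cancel₀ (hd k))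
  refine ⟨(isUnit_iff_isUnit_det O).mpr (isUnit_det_of_right_inverse hOB), fun i j => ?_⟩
  rw [inv_transpose_mul_self_of_mul_eq_one hOB, mul_diagonal_mul_transpose_apply, Finset.sum_filter]
  refine Finset.sum_congr rfl fun s _ => ?_
  have hds : d s ^ 2 = e s ^ 2 := by by_cases hs : (s : ℕ) = 0 <;> simp [d, hs]
  simp only [lowerOnes_apply, Fin.le_def, le_min_iff, Pi.inv_apply, inv_pow, hds, one_div]
  split_ifs <;> simp_all

/-- Theorem 2 of the paper for chain-topology RPMGs (landmark attached to vehicle 1):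
the covariance matrix `(Oᵀ O)⁻¹` has `(i,j)` entry `∑_{s ≤ min i j} 1/(e s)²`. -/
theorem chain_covariance_landmark_first
    (n : ℕ) (hn : 1 ≤ n) (e : Fin n → ℝ) (he : ∀ s, e s ≠ 0)
    (O : Matrix (Fin n) (Fin n) ℝ)
    (hO : ∀ k l : Fin n,
      O k l = if (k : ℕ) = 0 then (if l = k then e k else 0)
        else if (l : ℕ) = (k : ℕ) - 1 then e k
        else if l = k then -(e k) else 0) :
    IsUnit O ∧
    ∀ i j : Fin n,
      (Oᵀ * O)⁻¹ i j
        = ∑ s ∈ Finset.univ.filter (fun s : Fin n => (s : ℕ) ≤ min (i : ℕ) (j : ℕ)),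
            1 / (e s) ^ 2 :=
  chain_covariance_landmark_first_general n e he O hO
end

section
/- Let n ≥ 1 and let e : Fin n → ℝ with e s ≠ 0 for every s. Define O : Matrix (Fin n) (Fin n) ℝ by: for k < n-1, O k k = e k and O k (k+1) = -(e k); O (n-1) (n-1) = e (n-1); and all other entries zero (this encodes a chain relative position measurement graph in which the landmark is connected to the last vehicle n). Then O is invertible and for all indices i, j, the (i,j) entry of (Oᵀ * O)⁻¹ equals ∑_{s ≥ max(i,j)} 1/(e s)². -/
/-! `O` factors as `diagonal e * (1 - N)` with `N` the superdiagonal shift, and `1 - N` is inverted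
by the upper-triangular all-ones matrix `U`. Hence `O⁻¹ = U * diagonal e⁻¹` and
`(Oᵀ O)⁻¹ = O⁻¹ O⁻¹ᵀ = U * diagonal e⁻² * Uᵀ`, whose `(i, j)` entry sums `e s⁻²` over
`s ≥ max i j`. -/

open Matrix Finset

def upperOnes (ι R : Type*) [LE ι] [DecidableLE ι] [Zero R] [One R] : Matrix ι ι R :=
  of fun i j => if i ≤ j then 1 else 0

def superdiagShift (n : ℕ) (R : Type*) [Zero R] [One R] : Matrix (Fin n) (Fin n) R :=
  of fun i j => if (j : ℕ) = i + 1 then 1 else 0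

theorem one_sub_superdiagShift_mul_upperOnes (n : ℕ) (R : Type*) [Ring R] :
    (1 - superdiagShift n R) * upperOnes (Fin n) R = 1 := by
  ext k j
  have hshift : (superdiagShift n R * upperOnes (Fin n) R) k j
      = if (k : ℕ) + 1 ≤ j then 1 else 0 := by
    simp only [mul_apply, superdiagShift, upperOnes, of_apply, ite_mul, one_mul, zero_mul]
    rcases lt_or_ge ((k : ℕ) + 1) n with hk | hk
    · rw [Fintype.sum_eq_single ⟨k + 1, hk⟩ fun l hl => if_neg fun h => hl (Fin.ext h)]
      simp [Fin.le_def]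
    · have := j.isLt
      rw [sum_eq_zero fun l _ => if_neg (by omega), if_neg (by omega)]
  rw [sub_mul, one_mul, Matrix.sub_apply, hshift, one_apply]
  simp only [upperOnes, of_apply, Fin.le_def, Fin.ext_iff]
  split_ifs <;> first | omega | simp

theorem upperOnes_mul_diagonal_mul_transpose_apply {ι R : Type*} [Fintype ι] [DecidableEq ι]
    [LinearOrder ι] [Semiring R] (d : ι → R) (i j : ι) :
    (upperOnes ι R * diagonal d * (upperOnes ι R)ᵀ) i j
      = ∑ s ∈ univ.filter (fun s => max i j ≤ s), d s := by
  rw [mul_apply]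
  simp only [mul_diagonal, transpose_apply, upperOnes, of_apply, sum_filter, max_le_iff]
  refine sum_congr rfl fun s _ => ?_
  by_cases hi : i ≤ s <;> by_cases hj : j ≤ s <;> simp [hi, hj]

-- The last row of `superdiagShift` vanishes, which absorbs the separate `k = n - 1` case of `hO`.
theorem eq_diagonal_mul_one_sub_superdiagShift {n : ℕ} {R : Type*} [Ring R] (e : Fin n → R)
    (O : Matrix (Fin n) (Fin n) R)
    (hO : ∀ k l : Fin n,
      O k l = if (k : ℕ) = n - 1 then (if l = k then e k else 0)
        else if l = k then e k
        else if (l : ℕ) = (k : ℕ) + 1 then -(e k) else 0) :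
    O = diagonal e * (1 - superdiagShift n R) := by
  ext k l
  rw [hO, diagonal_mul, Matrix.sub_apply, one_apply]
  simp only [superdiagShift, of_apply, Fin.ext_iff]
  have := k.isLt; have := l.isLt
  split_ifs <;> first | omega | simp

theorem inv_transpose_mul_self_of_mul_eq_one {ι R : Type*} [Fintype ι] [DecidableEq ι] [CommRing R]
    {A B : Matrix ι ι R} (h : A * B = 1) : (Aᵀ * A)⁻¹ = B * Bᵀ := by
  rw [Matrix.mul_inv_rev, inv_eq_right_inv h, ← transpose_nonsing_inv, inv_eq_right_inv h]

theorem chain_covariance_landmark_last_general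
    (n : ℕ) (e : Fin n → ℝ) (he : ∀ s, e s ≠ 0)
    (O : Matrix (Fin n) (Fin n) ℝ)
    (hO : ∀ k l : Fin n,
      O k l = if (k : ℕ) = n - 1 then (if l = k then e k else 0)
        else if l = k then e k
        else if (l : ℕ) = (k : ℕ) + 1 then -(e k) else 0) :
    IsUnit O ∧
    ∀ i j : Fin n,
      (Oᵀ * O)⁻¹ i j
        = ∑ s ∈ Finset.univ.filter (fun s : Fin n => max (i : ℕ) (j : ℕ) ≤ (s : ℕ)),
            1 / (e s) ^ 2 := by
  set B := upperOnes (Fin n) ℝ * diagonal (fun s => (e s)⁻¹)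
  have hOB : O * B = 1 := by
    rw [eq_diagonal_mul_one_sub_superdiagShift e O hO, Matrix.mul_assoc,
      ← Matrix.mul_assoc _ (upperOnes _ _), one_sub_superdiagShift_mul_upperOnes, Matrix.one_mul,
      diagonal_mul_diagonal]
    simp only [mul_inv_cancel₀ (he _), diagonal_one]
  refine ⟨IsUnit.of_mul_eq_one B hOB, fun i j => ?_⟩
  rw [inv_transpose_mul_self_of_mul_eq_one hOB, transpose_mul, diagonal_transpose,
    Matrix.mul_assoc, ← Matrix.mul_assoc (diagonal _), diagonal_mul_diagonal, ← Matrix.mul_assoc,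
    upperOnes_mul_diagonal_mul_transpose_apply]
  simp only [← Fin.coe_max, ← Fin.le_def, one_div, sq, mul_inv]

/-- Theorem 2 of the paper for chain-topology RPMGs with the landmark attached to
the last vehicle: the covariance matrix `(Oᵀ O)⁻¹` has `(i,j)` entry
`∑_{s ≥ max i j} 1/(e s)²`. -/
theorem chain_covariance_landmark_last
    (n : ℕ) (hn : 1 ≤ n) (e : Fin n → ℝ) (he : ∀ s, e s ≠ 0)
    (O : Matrix (Fin n) (Fin n) ℝ)
    (hO : ∀ k l : Fin n,
      O k l = if (k : ℕ) = n - 1 then (if l = k then e k else 0)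
        else if l = k then e k
        else if (l : ℕ) = (k : ℕ) + 1 then -(e k) else 0) :
    IsUnit O ∧
    ∀ i j : Fin n,
      (Oᵀ * O)⁻¹ i j
        = ∑ s ∈ Finset.univ.filter (fun s : Fin n => max (i : ℕ) (j : ℕ) ≤ (s : ℕ)),
            1 / (e s) ^ 2 :=
  chain_covariance_landmark_last_general n e he O hO
end

section
/- Let ψ₁ ψ₂ : ℝ and define g : (ℝ × ℝ) × (ℝ × ℝ) → ℝ by g ((x₁, y₁), (x₂, y₂)) = ((x₁ - x₂) * (cos ψ₁ - cos ψ₂) + (y₁ - y₂) * (sin ψ₁ - sin ψ₂)) / sqrt ((x₁ - x₂)² + (y₁ - y₂)²). Then at any point with (x₁, y₁) ≠ (x₂, y₂), writing R = sqrt((x₁ - x₂)² + (y₁ - y₂)²), Δψ⁻ = ψ₁ - ψ₂ and Δψ⁺ = ψ₁ + ψ₂, the partial derivative of g with respect to x₁ equals -2 * (y₁ - y₂) * sin (Δψ⁻/2) * ((x₁ - x₂) * cos (Δψ⁺/2) + (y₁ - y₂) * sin (Δψ⁺/2)) / R³, and the partial derivative with respect to y₁ equals 2 * (x₁ - x₂)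 * sin (Δψ⁻/2) * ((x₁ - x₂) * cos (Δψ⁺/2) + (y₁ - y₂) * sin (Δψ⁺/2)) / R³. -/
open Real

/-!
Only the relative position `(u, v) = (x₁ - x₂, y₁ - y₂)` enters, and `g` is the linear form
`u a + v b` divided by `√(u² + v²)`, with `a = cos ψ₁ - cos ψ₂`, `b = sin ψ₁ - sin ψ₂`.
Differentiating along `u` gives `v (a v - b u) / R³`, and by the sum-to-product formulas
`a v - b u = -2 sin (Δψ⁻/2) (u cos (Δψ⁺/2) + v sin (Δψ⁺/2))`; the derivative along `v` is the
same computation with the roles of the two coordinates exchanged.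
-/

theorem cos_sub_cos_mul_sub_sin_sub_sin_mul (ψ₁ ψ₂ u v : ℝ) :
    (cos ψ₁ - cos ψ₂) * v - (sin ψ₁ - sin ψ₂) * u
      = -2 * sin ((ψ₁ - ψ₂) / 2) * (u * cos ((ψ₁ + ψ₂) / 2) + v * sin ((ψ₁ + ψ₂) / 2)) := by
  rw [cos_sub_cos, sin_sub_sin]
  ring

theorem hasDerivAt_mul_add_mul_div_sqrt (a b u v : ℝ) (h : 0 < u ^ 2 + v ^ 2) :
    HasDerivAt (fun t => ((u + t) * a + v * b) / √((u + t) ^ 2 + v ^ 2))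
      (v * (a * v - b * u) / √(u ^ 2 + v ^ 2) ^ 3) 0 := by
  have hshift : HasDerivAt (fun t : ℝ => u + t) 1 0 := (hasDerivAt_id 0).const_add u
  have hnum : HasDerivAt (fun t => (u + t) * a + v * b) a 0 := by
    simpa using (hshift.mul_const a).add_const (v * b)
  have hsq : HasDerivAt (fun t => (u + t) ^ 2 + v ^ 2) (2 * u) 0 := by
    simpa using (hshift.pow 2).add_const (v ^ 2)
  have hR : √(u ^ 2 + v ^ 2) ≠ 0 := sqrt_ne_zero'.2 h
  refine (hnum.div (hsq.sqrt (by simpa using h.ne')) (by simpa using hR)).congr_deriv ?_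
  simp only [add_zero]
  field_simp
  rw [sq_sqrt h.le]
  ring

/-- Gradient of the first-order Lie derivative of the relative range measurement
between two vehicles, in half-angle form. -/
theorem relative_range_lie_derivative_gradient (ψ₁ ψ₂ : ℝ)
    (g : (ℝ × ℝ) × (ℝ × ℝ) → ℝ)
    (hg : ∀ p : (ℝ × ℝ) × (ℝ × ℝ),
      g p = ((p.1.1 - p.2.1) * (Real.cos ψ₁ - Real.cos ψ₂)
              + (p.1.2 - p.2.2) * (Real.sin ψ₁ - Real.sin ψ₂)) /
        Real.sqrt ((p.1.1 - p.2.1) ^ 2 + (p.1.2 - p.2.2) ^ 2))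
    (x₁ y₁ x₂ y₂ : ℝ) (hne : (x₁, y₁) ≠ (x₂, y₂)) :
    DifferentiableAt ℝ g ((x₁, y₁), (x₂, y₂)) ∧
    fderiv ℝ g ((x₁, y₁), (x₂, y₂)) ((1, 0), (0, 0))
      = -2 * (y₁ - y₂) * Real.sin ((ψ₁ - ψ₂) / 2) *
          ((x₁ - x₂) * Real.cos ((ψ₁ + ψ₂) / 2)
            + (y₁ - y₂) * Real.sin ((ψ₁ + ψ₂) / 2)) /
          (Real.sqrt ((x₁ - x₂) ^ 2 + (y₁ - y₂) ^ 2)) ^ 3 ∧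
    fderiv ℝ g ((x₁, y₁), (x₂, y₂)) ((0, 1), (0, 0))
      = 2 * (x₁ - x₂) * Real.sin ((ψ₁ - ψ₂) / 2) *
          ((x₁ - x₂) * Real.cos ((ψ₁ + ψ₂) / 2)
            + (y₁ - y₂) * Real.sin ((ψ₁ + ψ₂) / 2)) /
          (Real.sqrt ((x₁ - x₂) ^ 2 + (y₁ - y₂) ^ 2)) ^ 3 := by
  have hQ : 0 < (x₁ - x₂) ^ 2 + (y₁ - y₂) ^ 2 := by
    have : x₁ - x₂ ≠ 0 ∨ y₁ - y₂ ≠ 0 := by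
      by_contra! h
      exact hne (by rw [sub_eq_zero.1 h.1, sub_eq_zero.1 h.2])
    rcases this with h | h <;> positivity
  have hdiff : DifferentiableAt ℝ g ((x₁, y₁), (x₂, y₂)) := by
    simp only [funext hg, div_eq_mul_inv]
    fun_prop (disch := simp [sqrt_ne_zero', hQ, hQ.ne'])
  have hderiv := hdiff.hasFDerivAt.hasLineDerivAt
  refine ⟨hdiff, (hderiv _).unique ?_, (hderiv _).unique ?_⟩
  · have hline : (fun t : ℝ => g (((x₁, y₁), (x₂, y₂)) + t • ((1, 0), (0, 0))))
        = fun t => ((x₁ - x₂ + t) * (cos ψ₁ - cos ψ₂) + (y₁ - y₂) * (sin ψ₁ - sin ψ₂)) /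
            √((x₁ - x₂ + t) ^ 2 + (y₁ - y₂) ^ 2) := by
      funext t
      simp only [Prod.smul_mk, smul_eq_mul, mul_one, mul_zero, Prod.mk_add_mk, add_zero, hg]
      ring_nf
    rw [HasLineDerivAt, hline]
    refine (hasDerivAt_mul_add_mul_div_sqrt _ _ _ _ hQ).congr_deriv ?_
    rw [cos_sub_cos_mul_sub_sin_sub_sin_mul]
    ring
  · have hline : (fun t : ℝ => g (((x₁, y₁), (x₂, y₂)) + t • ((0, 1), (0, 0))))
        = fun t => ((y₁ - y₂ + t) * (sin ψ₁ - sin ψ₂) + (x₁ - x₂) * (cos ψ₁ - cos ψ₂)) /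
            √((y₁ - y₂ + t) ^ 2 + (x₁ - x₂) ^ 2) := by
      funext t
      simp only [Prod.smul_mk, smul_eq_mul, mul_zero, mul_one, Prod.mk_add_mk, add_zero, hg]
      ring_nf
    rw [HasLineDerivAt, hline]
    refine (hasDerivAt_mul_add_mul_div_sqrt _ _ _ _ (by linarith)).congr_deriv ?_
    rw [add_comm ((y₁ - y₂) ^ 2)]
    linear_combination (-(x₁ - x₂) / √((x₁ - x₂) ^ 2 + (y₁ - y₂) ^ 2) ^ 3) *
      cos_sub_cos_mul_sub_sin_sub_sin_mul ψ₁ ψ₂ (x₁ - x₂) (y₁ - y₂)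
end
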